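/- arXiv:1903.07837 — 2 statements merged into one kernel-verified Lean document; each statement's English description precedes it below -/
import Mathlib

section
/- Let M be a two-counter Minsky machine with instruction set I and let (A, R, Rp, A0, ↪) be its APA encoding. If x = (q1, 1, q2, ε) ∈ I, then for all m1, m2 ∈ ℕ and every reference set Ax ⊆ A there is a single APA transition F(A^I ∪ {σIc(x), σ1(m1), σ2(m2)}) ↪^{Ax} F(A^I ∪ {σQ(q2), σ1(m1+1), σ2(m2)}), obtained by executing the two conversions (σIc(x), σ1(m1), σ1(m1+1)) and (σ1(m1), σIc(x), σQ(q2)) simultaneously. -/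
/-- A two-counter Minsky machine over a state type `Q`.  An instruction
`(q1, i, q2, u)` has source state `q1 ≠ qf`, counter index `i ∈ {1,2}`,
target state `q2` and optional alternative target `u : Option Q`
(`none` playing the role of `ε`). -/
structure Minsky (Q : Type*) where
  n1 : ℕ
  n2 : ℕ
  q0 : Q
  qf : Q
  I : Set (Q × ℕ × Q × Option Q)
  I_idx : ∀ x ∈ I, x.2.1 = 1 ∨ x.2.1 = 2
  I_src : ∀ x ∈ I, x.1 ≠ qf
  I_total : ∀ q : Q, q ≠ qf → ∃ i q2 u, (q, i, q2, u) ∈ I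

/-- The one-step relation `⇒` of a two-counter Minsky machine. -/
inductive Minsky.Step {Q : Type*} (M : Minsky Q) : Q × ℕ × ℕ → Q × ℕ × ℕ → Prop
  | inc1 {q1 q2 : Q} {m1 m2 : ℕ} : (q1, 1, q2, (none : Option Q)) ∈ M.I →
      M.Step (q1, m1, m2) (q2, m1 + 1, m2)
  | inc2 {q1 q2 : Q} {m1 m2 : ℕ} : (q1, 2, q2, (none : Option Q)) ∈ M.I →
      M.Step (q1, m1, m2) (q2, m1, m2 + 1)
  | dec1 {q1 q2 q3 : Q} {m1 m2 : ℕ} : (q1, 1, q2, some q3) ∈ M.I → 0 < m1 →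
      M.Step (q1, m1, m2) (q3, m1 - 1, m2)
  | dec2 {q1 q2 q3 : Q} {m1 m2 : ℕ} : (q1, 2, q2, some q3) ∈ M.I → 0 < m2 →
      M.Step (q1, m1, m2) (q3, m1, m2 - 1)
  | zero1 {q1 q2 q3 : Q} {m2 : ℕ} : (q1, 1, q2, some q3) ∈ M.I →
      M.Step (q1, 0, m2) (q2, 0, m2)
  | zero2 {q1 q2 q3 : Q} {m1 : ℕ} : (q1, 2, q2, some q3) ∈ M.I →
      M.Step (q1, m1, 0) (q2, m1, 0)

/-- `M.StepN k c c'` says `⇒^k(c) = c'`, i.e. `c'` is obtained from `c`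
by exactly `k` Minsky machine steps. -/
def Minsky.StepN {Q : Type*} (M : Minsky Q) : ℕ → Q × ℕ × ℕ → Q × ℕ × ℕ → Prop
  | 0, c, c' => c = c'
  | k + 1, c, c' => ∃ c'', M.Step c c'' ∧ M.StepN k c'' c'

/-- An Abstract Persuasion Argumentation framework over the argument type `α`:
an attack relation `R`, a persuasion relation `Rp ⊆ A × (A ∪ {ε}) × A`
(`none` playing the role of `ε`), and an initial set `A0`.
A state `F(A1)` is identified with the set `A1 ⊆ A` of visible arguments
(since the state is `(A1, R ∩ (A1 × A1))`, a function of `A1`). -/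
structure APA (α : Type*) where
  R : Set (α × α)
  Rp : Set (α × Option α × α)
  A0 : Set α

namespace APA

variable {α : Type*} (F : APA α)

/-- `a1` attacks `a2` in the state `F(A1)`. -/
def Attacks (A1 : Set α) (a1 a2 : α) : Prop :=
  a1 ∈ A1 ∧ a2 ∈ A1 ∧ (a1, a2) ∈ F.R

/-- `Γ^{Ax}_{F(A1)}`: members `(a1, α, a2)` of `Rp` with `a1 ∈ A1`,
`α ∈ {ε} ∪ A1`, and `a1` not attacked in `F(A1)` by any member of `Ax`. -/
def gamma (Ax A1 : Set α) : Set (α × Option α × α) :=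
  {t | t ∈ F.Rp ∧ t.1 ∈ A1 ∧ (∀ a : α, t.2.1 = some a → a ∈ A1) ∧
    ∀ b ∈ Ax, ¬ F.Attacks A1 b t.1}

/-- `neg^{A1}(Γ)`. -/
def neg (A1 : Set α) (Γ : Set (α × Option α × α)) : Set α :=
  {ax | ax ∈ A1 ∧ ∃ a1 ∈ A1, ∃ a2 : α, (a1, some ax, a2) ∈ Γ}

/-- `pos^{A1}(Γ)`. -/
def pos (A1 : Set α) (Γ : Set (α × Option α × α)) : Set α :=
  {a2 | ∃ a1 ∈ A1, ∃ m : Option α, (∀ a : α, m = some a → a ∈ A1) ∧ (a1, m, a2) ∈ Γ}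

/-- The transition `F(A1) ↪^{Ax} F(A2)` effected by the specific nonempty
`Γ ⊆ Γ^{Ax}_{F(A1)}`. -/
def TransVia (Ax : Set α) (Γ : Set (α × Option α × α)) (A1 A2 : Set α) : Prop :=
  Γ.Nonempty ∧ Γ ⊆ F.gamma Ax A1 ∧ A2 = (A1 \ neg A1 Γ) ∪ pos A1 Γ

/-- The transition relation `F(A1) ↪^{Ax} F(A2)`. -/
def Trans (Ax A1 A2 : Set α) : Prop :=
  ∃ Γ : Set (α × Option α × α), F.TransVia Ax Γ A1 A2

/-- A state `F(A1)` is reachable iff it is obtained from the initial state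
`F(A0)` by a finite sequence of transitions (with arbitrary reference sets). -/
def Reachable (A1 : Set α) : Prop :=
  Relation.ReflTransGen (fun X Y => ∃ Ax : Set α, F.Trans Ax X Y) F.A0 A1

end APA

/-- `sigC σ1 σ2 i` is `σi` for `i ∈ {1, 2}`. -/
def sigC {α : Type*} (σ1 σ2 : ℕ → α) (i : ℕ) : ℕ → α :=
  if i = 1 then σ1 else σ2

/-- The persuasion relation of the APA encoding of a Minsky machine `M`. -/
def encRp {Q α : Type*} (M : Minsky Q) (σ1 σ2 : ℕ → α) (σQ : Q → α)
    (σI σIc : M.I → α) : Set (α × Option α × α) :=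
  {t | (∃ x : M.I, t = (σI x, some (σQ x.val.1), σIc x)) ∨
    (∃ x : M.I, ∃ n : ℕ, x.val.2.2.2 = none ∧
      t = (σIc x, some (sigC σ1 σ2 x.val.2.1 n), sigC σ1 σ2 x.val.2.1 (n + 1))) ∨
    (∃ x : M.I, ∃ n : ℕ, 1 ≤ n ∧ (∃ q3 : Q, x.val.2.2.2 = some q3) ∧
      t = (σIc x, some (sigC σ1 σ2 x.val.2.1 n), sigC σ1 σ2 x.val.2.1 (n - 1))) ∨
    (∃ x : M.I, ∃ n : ℕ, x.val.2.2.2 = none ∧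
      t = (sigC σ1 σ2 x.val.2.1 n, some (σIc x), σQ x.val.2.2.1)) ∨
    (∃ x : M.I, ∃ n : ℕ, 1 ≤ n ∧ ∃ q3 : Q, x.val.2.2.2 = some q3 ∧
      t = (sigC σ1 σ2 x.val.2.1 n, some (σIc x), σQ q3)) ∨
    (∃ x : M.I, ∃ q3 : Q, x.val.2.2.2 = some q3 ∧
      t = (sigC σ1 σ2 x.val.2.1 0, some (σIc x), σQ x.val.2.2.1))}

/-- The APA encoding of a two-counter Minsky machine `M`, over the argument
type `α` (playing the role of the class `A` of arguments): injective maps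
`σ1, σ2, σQ, σI, σIc` with pairwise disjoint ranges covering `α`, an empty
attack relation, the persuasion relation `encRp`, and the initial set
`{σ1 n1, σ2 n2, σQ q0} ∪ A^I`. -/
structure Encoding {Q : Type*} (M : Minsky Q) (α : Type*) extends APA α where
  σ1 : ℕ → α
  σ2 : ℕ → α
  σQ : Q → α
  σI : M.I → α
  σIc : M.I → α
  inj1 : Function.Injective σ1
  inj2 : Function.Injective σ2
  injQ : Function.Injective σQ
  injI : Function.Injective σI
  injIc : Function.Injective σIc
  disjoint_ranges : List.Pairwise Disjoint
    [Set.range σ1, Set.range σ2, Set.range σQ, Set.range σI, Set.range σIc]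
  ranges_cover : Set.range σ1 ∪ Set.range σ2 ∪ Set.range σQ ∪
    Set.range σI ∪ Set.range σIc = Set.univ
  R_empty : toAPA.R = ∅
  Rp_spec : toAPA.Rp = encRp M σ1 σ2 σQ σI σIc
  A0_spec : toAPA.A0 = {σ1 M.n1, σ2 M.n2, σQ M.q0} ∪ Set.range σI

/-- The set of visible arguments of the APA state `F(A^I ∪ {σQ q, σ1 m1, σ2 m2})`
corresponding to the Minsky machine configuration `(q, m1, m2)`. -/
def encState {Q α : Type*} {M : Minsky Q} (E : Encoding M α)
    (q : Q) (m1 m2 : ℕ) : Set α :=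
  Set.range E.σI ∪ {E.σQ q, E.σ1 m1, E.σ2 m2}

/-- The set of visible arguments of the intermediate APA state
`F(A^I ∪ {σIc x, σ1 m1, σ2 m2})`. -/
def encStateC {Q α : Type*} {M : Minsky Q} (E : Encoding M α)
    (x : M.I) (m1 m2 : ℕ) : Set α :=
  Set.range E.σI ∪ {E.σIc x, E.σ1 m1, E.σ2 m2}

/-! The two conversions use each other's source as their argument, so in the intermediate state
both are enabled, and with an empty attack relation nothing can block them.  Firing them together
consumes exactly `σIc x` and `σ1 m1` and produces `σ1 (m1 + 1)` and `σQ q2`; disjointness of the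
ranges of the encoding guarantees that the rest of the state, `A^I ∪ {σ2 m2}`, is untouched. -/

namespace APA

variable {α : Type*} (F : APA α) {Ax A1 : Set α} {Γ : Set (α × Option α × α)}

theorem mem_gamma_of_R_eq_empty (hR : F.R = ∅) {t : α × Option α × α} :
    t ∈ F.gamma Ax A1 ↔ t ∈ F.Rp ∧ t.1 ∈ A1 ∧ ∀ a : α, t.2.1 = some a → a ∈ A1 := by
  simp only [gamma, Attacks, hR, Set.mem_ofPred_eq, Set.mem_empty_iff_false, and_false,
    not_false_eq_true, implies_true, and_true]

theorem neg_eq_of_subset_gamma (hΓ : Γ ⊆ F.gamma Ax A1) :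
    neg A1 Γ = {ax | ∃ a1 a2, (a1, some ax, a2) ∈ Γ} := by
  ext ax
  constructor
  · rintro ⟨-, a1, -, a2, h⟩
    exact ⟨a1, a2, h⟩
  · rintro ⟨a1, a2, h⟩
    exact ⟨(hΓ h).2.2.1 ax rfl, a1, (hΓ h).2.1, a2, h⟩

theorem pos_eq_of_subset_gamma (hΓ : Γ ⊆ F.gamma Ax A1) :
    pos A1 Γ = {a2 | ∃ a1 m, (a1, m, a2) ∈ Γ} := by
  ext a2
  constructor
  · rintro ⟨a1, -, m, -, h⟩
    exact ⟨a1, m, h⟩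
  · rintro ⟨a1, m, h⟩
    exact ⟨a1, (hΓ h).2.1, m, (hΓ h).2.2.1, h⟩

theorem transVia_swap_pair (hR : F.R = ∅) {a b c d : α}
    (hac : (a, some b, c) ∈ F.Rp) (hbd : (b, some a, d) ∈ F.Rp) (ha : a ∈ A1) (hb : b ∈ A1) :
    F.TransVia Ax {(a, some b, c), (b, some a, d)} A1 ((A1 \ {a, b}) ∪ {c, d}) := by
  have hΓ : {(a, some b, c), (b, some a, d)} ⊆ F.gamma Ax A1 := by
    rintro t (rfl | rfl | -) <;> simp_all [F.mem_gamma_of_R_eq_empty hR]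
  refine ⟨Set.insert_nonempty _ _, hΓ, ?_⟩
  rw [F.neg_eq_of_subset_gamma hΓ, F.pos_eq_of_subset_gamma hΓ]
  congr 2 <;> ext <;> aesop

end APA

theorem sigC_one {α : Type*} (σ1 σ2 : ℕ → α) : sigC σ1 σ2 1 = σ1 := if_pos rfl

namespace Encoding

variable {Q α : Type*} {M : Minsky Q} (E : Encoding M α)

theorem disjoint_range_σ1_σ2 : Disjoint (Set.range E.σ1) (Set.range E.σ2) :=
  List.rel_of_pairwise_cons E.disjoint_ranges (by simp)

theorem disjoint_range_σ1_σI : Disjoint (Set.range E.σ1) (Set.range E.σI) :=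
  List.rel_of_pairwise_cons E.disjoint_ranges (by simp)

theorem disjoint_range_σ2_σIc : Disjoint (Set.range E.σ2) (Set.range E.σIc) :=
  List.rel_of_pairwise_cons E.disjoint_ranges.of_cons (by simp)

theorem disjoint_range_σI_σIc : Disjoint (Set.range E.σI) (Set.range E.σIc) :=
  List.rel_of_pairwise_cons E.disjoint_ranges.of_cons.of_cons.of_cons (by simp)

theorem incr_counter_mem_Rp (x : M.I) (hx : x.val.2.2.2 = none) (n : ℕ) :
    (E.σIc x, some (sigC E.σ1 E.σ2 x.val.2.1 n), sigC E.σ1 E.σ2 x.val.2.1 (n + 1)) ∈ E.Rp := by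
  rw [E.Rp_spec]
  exact Or.inr (Or.inl ⟨x, n, hx, rfl⟩)

theorem incr_state_mem_Rp (x : M.I) (hx : x.val.2.2.2 = none) (n : ℕ) :
    (sigC E.σ1 E.σ2 x.val.2.1 n, some (E.σIc x), E.σQ x.val.2.2.1) ∈ E.Rp := by
  rw [E.Rp_spec]
  exact Or.inr (Or.inr (Or.inr (Or.inl ⟨x, n, hx, rfl⟩)))

theorem encStateC_diff (x : M.I) (m1 m2 : ℕ) :
    encStateC E x m1 m2 \ {E.σIc x, E.σ1 m1} = Set.range E.σI ∪ {E.σ2 m2} := by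
  have h1I := Set.disjoint_left.1 E.disjoint_range_σ1_σI
  have hIIc := Set.disjoint_left.1 E.disjoint_range_σI_σIc
  have h12 := Set.disjoint_left.1 E.disjoint_range_σ1_σ2
  have h2Ic := Set.disjoint_left.1 E.disjoint_range_σ2_σIc
  ext a
  simp only [encStateC, Set.mem_sdiff, Set.mem_union, Set.mem_insert_iff, Set.mem_singleton_iff]
  constructor
  · rintro ⟨(hI | rfl | rfl | rfl), hne⟩
    · exact Or.inl hI
    · exact absurd (Or.inl rfl) hne
    · exact absurd (Or.inr rfl) hne
    · exact Or.inr rfl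
  · rintro (hI | rfl)
    · refine ⟨Or.inl hI, ?_⟩
      rintro (rfl | rfl)
      · exact hIIc hI ⟨x, rfl⟩
      · exact h1I ⟨m1, rfl⟩ hI
    · refine ⟨Or.inr (Or.inr (Or.inr rfl)), ?_⟩
      rintro (h | h)
      · exact h2Ic ⟨m2, rfl⟩ ⟨x, h.symm⟩
      · exact h12 ⟨m1, h.symm⟩ ⟨m2, rfl⟩

end Encoding

theorem second_phase_increment_transition_general {Q α : Type*}
    (M : Minsky Q) (E : Encoding M α) (q1 q2 : Q)
    (hx : (q1, 1, q2, (none : Option Q)) ∈ M.I) (m1 m2 : ℕ) (Ax : Set α) :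
    E.toAPA.TransVia Ax
      {(E.σIc ⟨(q1, 1, q2, none), hx⟩, some (E.σ1 m1), E.σ1 (m1 + 1)),
       (E.σ1 m1, some (E.σIc ⟨(q1, 1, q2, none), hx⟩), E.σQ q2)}
      (encStateC E ⟨(q1, 1, q2, none), hx⟩ m1 m2)
      (encState E q2 (m1 + 1) m2) := by
  set x : M.I := ⟨(q1, 1, q2, none), hx⟩
  have hcounter := E.incr_counter_mem_Rp x rfl m1
  have hstate := E.incr_state_mem_Rp x rfl m1
  rw [sigC_one] at hcounter hstate
  convert E.toAPA.transVia_swap_pair (A1 := encStateC E x m1 m2) E.R_empty hcounter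
    hstate (by simp [encStateC]) (by simp [encStateC]) using 1
  rw [E.encStateC_diff, encState]
  ext a
  simp only [Set.mem_union, Set.mem_insert_iff, Set.mem_singleton_iff]
  tauto

/-- for the instruction `x = (q1, 1, q2, ε)`, the single APA
transition from `F(A^I ∪ {σIc x, σ1 m1, σ2 m2})` to
`F(A^I ∪ {σQ q2, σ1 (m1+1), σ2 m2})` obtained by executing the two conversions
`(σIc x, σ1 m1, σ1 (m1+1))` and `(σ1 m1, σIc x, σQ q2)` simultaneously. -/
theorem second_phase_increment_transition {Q α : Type*} [Finite Q]
    (M : Minsky Q) (E : Encoding M α) (q1 q2 : Q)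
    (hx : (q1, 1, q2, (none : Option Q)) ∈ M.I) (m1 m2 : ℕ) (Ax : Set α) :
    E.toAPA.TransVia Ax
      {(E.σIc ⟨(q1, 1, q2, none), hx⟩, some (E.σ1 m1), E.σ1 (m1 + 1)),
       (E.σ1 m1, some (E.σIc ⟨(q1, 1, q2, none), hx⟩), E.σQ q2)}
      (encStateC E ⟨(q1, 1, q2, none), hx⟩ m1 m2)
      (encState E q2 (m1 + 1) m2) :=
  second_phase_increment_transition_general M E q1 q2 hx m1 m2 Ax
end

section
/- Let M be a two-counter Minsky machine with instruction set I and let (A, R, Rp, A0, ↪) be its APA encoding. If x = (q1, 1, q2, q3) ∈ I, then for all m1 ≥ 1, all m2 ∈ ℕ, and every reference set Ax ⊆ A there is a single APA transition F(A^I ∪ {σIc(x), σ1(m1), σ2(m2)}) ↪^{Ax} F(A^I ∪ {σQ(q3), σ1(m1−1), σ2(m2)}), obtained by executing the two conversions (σIc(x), σ1(m1), σ1(m1−1)) and (σ1(m1), σIc(x), σQ(q3)) simultaneously. -/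
/-!
The attack relation of the encoding is empty, so every conversion whose premises are visible
is enabled. The two conversions of the decrement step use each other's premise, so executing
them together consumes exactly `σIc x` and `σ1 m1` and produces `σ1 (m1 - 1)` and `σQ q3`;
disjointness of the ranges of the `σ`'s guarantees that nothing else changes.
-/

namespace APA

variable {α : Type*} (F : APA α)

theorem not_attacks_of_R_eq_empty (hR : F.R = ∅) (A1 : Set α) (a b : α) :
    ¬ F.Attacks A1 a b := fun h => by simpa [hR] using h.2.2

theorem mem_gamma_of_R_eq_empty_s10 (hR : F.R = ∅) {Ax A1 : Set α} {a b c : α}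
    (hRp : (a, some b, c) ∈ F.Rp) (ha : a ∈ A1) (hb : b ∈ A1) :
    (a, some b, c) ∈ F.gamma Ax A1 :=
  ⟨hRp, ha, fun _ h => Option.some.inj h ▸ hb,
    fun _ _ => F.not_attacks_of_R_eq_empty hR A1 _ _⟩

theorem neg_swap {A1 : Set α} {a b c d : α} (ha : a ∈ A1) (hb : b ∈ A1) :
    neg A1 {(a, some b, c), (b, some a, d)} = {a, b} := by
  ext y
  simp only [neg, Set.mem_ofPred_eq, Set.mem_insert_iff, Set.mem_singleton_iff, Prod.mk.injEq,
    Option.some.injEq]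
  constructor
  · rintro ⟨-, a1, -, a2, ⟨-, rfl, -⟩ | ⟨-, rfl, -⟩⟩
    · exact Or.inr rfl
    · exact Or.inl rfl
  · rintro (rfl | rfl)
    · exact ⟨ha, b, hb, d, Or.inr ⟨rfl, rfl, rfl⟩⟩
    · exact ⟨hb, a, ha, c, Or.inl ⟨rfl, rfl, rfl⟩⟩

theorem pos_swap {A1 : Set α} {a b c d : α} (ha : a ∈ A1) (hb : b ∈ A1) :
    pos A1 {(a, some b, c), (b, some a, d)} = {c, d} := by
  ext y
  simp only [pos, Set.mem_ofPred_eq, Set.mem_insert_iff, Set.mem_singleton_iff, Prod.mk.injEq]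
  constructor
  · rintro ⟨a1, -, m, -, ⟨-, -, rfl⟩ | ⟨-, -, rfl⟩⟩
    · exact Or.inl rfl
    · exact Or.inr rfl
  · rintro (rfl | rfl)
    · exact ⟨a, ha, some b, fun _ h => Option.some.inj h ▸ hb, Or.inl ⟨rfl, rfl, rfl⟩⟩
    · exact ⟨b, hb, some a, fun _ h => Option.some.inj h ▸ ha, Or.inr ⟨rfl, rfl, rfl⟩⟩

theorem transVia_swap (hR : F.R = ∅) (Ax : Set α) {A1 : Set α} {a b c d : α}
    (hac : (a, some b, c) ∈ F.Rp) (hbd : (b, some a, d) ∈ F.Rp) (ha : a ∈ A1) (hb : b ∈ A1) :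
    F.TransVia Ax {(a, some b, c), (b, some a, d)} A1 (A1 \ {a, b} ∪ {c, d}) := by
  refine ⟨⟨_, Or.inl rfl⟩, ?_, by rw [neg_swap ha hb, pos_swap ha hb]⟩
  rintro t (rfl | rfl)
  · exact F.mem_gamma_of_R_eq_empty_s10 hR hac ha hb
  · exact F.mem_gamma_of_R_eq_empty_s10 hR hbd hb ha

end APA

section encRp

variable {Q α : Type*} {M : Minsky Q} (σ1 σ2 : ℕ → α) (σQ : Q → α) (σI σIc : M.I → α)

theorem mem_encRp_decrement (x : M.I) {q3 : Q} (hx : x.val.2.2.2 = some q3) {n : ℕ}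
    (hn : 1 ≤ n) :
    (σIc x, some (sigC σ1 σ2 x.val.2.1 n), sigC σ1 σ2 x.val.2.1 (n - 1)) ∈
      encRp M σ1 σ2 σQ σI σIc :=
  Or.inr (Or.inr (Or.inl ⟨x, n, hn, ⟨q3, hx⟩, rfl⟩))

theorem mem_encRp_nonzero_branch (x : M.I) {q3 : Q} (hx : x.val.2.2.2 = some q3) {n : ℕ}
    (hn : 1 ≤ n) :
    (sigC σ1 σ2 x.val.2.1 n, some (σIc x), σQ q3) ∈ encRp M σ1 σ2 σQ σI σIc :=
  Or.inr (Or.inr (Or.inr (Or.inr (Or.inl ⟨x, n, hn, q3, hx, rfl⟩))))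

end encRp

namespace Encoding

variable {Q α : Type*} {M : Minsky Q} (E : Encoding M α)

theorem σ2_ne_σ1 (m n : ℕ) : E.σ2 m ≠ E.σ1 n :=
  (Set.disjoint_range_iff.mp (List.rel_of_pairwise_cons E.disjoint_ranges (by simp)) n m).symm

theorem σ2_ne_σIc (m : ℕ) (x : M.I) : E.σ2 m ≠ E.σIc x :=
  Set.disjoint_range_iff.mp (List.rel_of_pairwise_cons E.disjoint_ranges.of_cons (by simp)) m x

theorem σ1_notMem_range_σI (m : ℕ) : E.σ1 m ∉ Set.range E.σI :=
  Set.disjoint_left.mp (List.rel_of_pairwise_cons E.disjoint_ranges (by simp)) ⟨m, rfl⟩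

theorem σIc_notMem_range_σI (x : M.I) : E.σIc x ∉ Set.range E.σI :=
  Set.disjoint_right.mp
    (List.rel_of_pairwise_cons E.disjoint_ranges.of_cons.of_cons.of_cons
      (List.mem_singleton_self _)) ⟨x, rfl⟩

theorem encStateC_sdiff_union (x : M.I) (m1 m1' m2 : ℕ) (q : Q) :
    encStateC E x m1 m2 \ {E.σIc x, E.σ1 m1} ∪ {E.σ1 m1', E.σQ q} = encState E q m1' m2 := by
  have := E.σ1_notMem_range_σI m1
  have := E.σIc_notMem_range_σI x
  have := E.σ2_ne_σ1 m2 m1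
  have := E.σ2_ne_σIc m2 x
  ext y
  simp only [encStateC, encState, Set.mem_union, Set.mem_sdiff, Set.mem_insert_iff,
    Set.mem_singleton_iff]
  grind

end Encoding

theorem second_phase_decrement_transition_general {Q α : Type*}
    (M : Minsky Q) (E : Encoding M α) (q1 q2 q3 : Q)
    (hx : (q1, 1, q2, some q3) ∈ M.I) (m1 : ℕ) (hm1 : 1 ≤ m1) (m2 : ℕ)
    (Ax : Set α) :
    E.toAPA.TransVia Ax
      {(E.σIc ⟨(q1, 1, q2, some q3), hx⟩, some (E.σ1 m1), E.σ1 (m1 - 1)),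
       (E.σ1 m1, some (E.σIc ⟨(q1, 1, q2, some q3), hx⟩), E.σQ q3)}
      (encStateC E ⟨(q1, 1, q2, some q3), hx⟩ m1 m2)
      (encState E q3 (m1 - 1) m2) := by
  set x : M.I := ⟨(q1, 1, q2, some q3), hx⟩
  have hdec : (E.σIc x, some (E.σ1 m1), E.σ1 (m1 - 1)) ∈ E.Rp :=
    E.Rp_spec ▸ mem_encRp_decrement E.σ1 E.σ2 E.σQ E.σI E.σIc x rfl hm1
  have hbranch : (E.σ1 m1, some (E.σIc x), E.σQ q3) ∈ E.Rp :=
    E.Rp_spec ▸ mem_encRp_nonzero_branch E.σ1 E.σ2 E.σQ E.σI E.σIc x rfl hm1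
  have hIc : E.σIc x ∈ encStateC E x m1 m2 := by simp [encStateC]
  have h1 : E.σ1 m1 ∈ encStateC E x m1 m2 := by simp [encStateC]
  rw [← E.encStateC_sdiff_union x m1 (m1 - 1) m2 q3]
  exact E.transVia_swap E.R_empty Ax hdec hbranch hIc h1

/-- for the instruction `x = (q1, 1, q2, q3)` and `m1 ≥ 1`, the
single APA transition from `F(A^I ∪ {σIc x, σ1 m1, σ2 m2})` to
`F(A^I ∪ {σQ q3, σ1 (m1-1), σ2 m2})` obtained by executing the two conversions
`(σIc x, σ1 m1, σ1 (m1-1))` and `(σ1 m1, σIc x, σQ q3)` simultaneously. -/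
theorem second_phase_decrement_transition {Q α : Type*} [Finite Q]
    (M : Minsky Q) (E : Encoding M α) (q1 q2 q3 : Q)
    (hx : (q1, 1, q2, some q3) ∈ M.I) (m1 : ℕ) (hm1 : 1 ≤ m1) (m2 : ℕ)
    (Ax : Set α) :
    E.toAPA.TransVia Ax
      {(E.σIc ⟨(q1, 1, q2, some q3), hx⟩, some (E.σ1 m1), E.σ1 (m1 - 1)),
       (E.σ1 m1, some (E.σIc ⟨(q1, 1, q2, some q3), hx⟩), E.σQ q3)}
      (encStateC E ⟨(q1, 1, q2, some q3), hx⟩ m1 m2)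
      (encState E q3 (m1 - 1) m2) :=
  second_phase_decrement_transition_general M E q1 q2 q3 hx m1 hm1 m2 Ax
end
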